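/- arXiv:1210.6298 — 6 statements merged into one kernel-verified Lean document; each statement's English description precedes it below -/
import Mathlib

section
/- Let F be a subset of the total functions on ℕ, and let F' : T_1^k → T_{m+1} be an F-substitutional mapping (m ≥ 1). Then there exists an F-substitutional mapping G : T_1^{k+1} → T_m such that F'(f_1,...,f_k)(s,t_1,...,t_m) = G(f_1,...,f_k,const_s)(t_1,...,t_m) for all f_1,...,f_k ∈ T_1 and all s,t_1,...,t_m ∈ ℕ. -/
/-- A `k`-ary operator: a map from `k`-tuples of unary total functions on ℕ to
unary total functions on ℕ. -/
def Op (k : ℕ) := (Fin k → ℕ → ℕ) → ℕ → ℕ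

/-- A class of operators, one set for each arity. -/
def OpClass := ∀ k : ℕ, Set (Op k)

/-- A class of operators is appropriate if it contains all projection operators,
contains the composition operator, is closed under composition of operators,
and is closed under diagonalization. -/
structure Appropriate (O : OpClass) : Prop where
  proj : ∀ (k : ℕ) (i : Fin k), (fun fs => fs i) ∈ O k
  comp : (fun (fs : Fin 2 → ℕ → ℕ) n => fs 0 (fs 1 n)) ∈ O 2
  subst : ∀ (k l : ℕ) (F : Op k) (G : Fin k → Op l),
      F ∈ O k → (∀ i, G i ∈ O l) →
      (fun gs => F (fun i => G i gs)) ∈ O l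
  diag : ∀ (k : ℕ) (F : Op (k + 1)), F ∈ O (k + 1) →
      (fun fs n => F (Fin.snoc fs (fun _ => n)) n) ∈ O k

/-- A function `f : ℕ^k → ℕ` is `O`-representable if the pointwise-lifted
operator `f̊` belongs to `O`. -/
def Representable (O : OpClass) (k : ℕ) (f : (Fin k → ℕ) → ℕ) : Prop :=
  (fun fs n => f (fun i => fs i n)) ∈ O k

/-- The `F`-substitutional mappings of `T_1^k` into `T_m`. -/
inductive Subst (F : ∀ r : ℕ, Set ((Fin r → ℕ) → ℕ)) (k : ℕ) :
    ∀ m : ℕ, ((Fin k → ℕ → ℕ) → (Fin m → ℕ) → ℕ) → Prop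
  | proj (m : ℕ) (j : Fin m) : Subst F k m (fun _ v => v j)
  | arg (m : ℕ) (i : Fin k) (F0 : (Fin k → ℕ → ℕ) → (Fin m → ℕ) → ℕ) :
      Subst F k m F0 → Subst F k m (fun fs v => fs i (F0 fs v))
  | app (m r : ℕ) (f : (Fin r → ℕ) → ℕ) (hf : f ∈ F r)
      (Fs : Fin r → (Fin k → ℕ → ℕ) → (Fin m → ℕ) → ℕ) :
      (∀ j, Subst F k m (Fs j)) →
      Subst F k m (fun fs v => f (fun j => Fs j fs v))

/-! Substituting `F`-substitutional mappings for the projections of an `F`-substitutional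
mapping, and renaming its argument functions, gives again an `F`-substitutional mapping. `G` is
obtained from `F'` in this way by substituting `f_{k+1}(t_1)` for the projection onto `s`: at
`f_{k+1} = const_s` it takes the value `s`. -/

theorem Subst.comp {F : ∀ r : ℕ, Set ((Fin r → ℕ) → ℕ)} {k k' n m : ℕ}
    {F0 : (Fin k → ℕ → ℕ) → (Fin n → ℕ) → ℕ} (h : Subst F k n F0) (σ : Fin k → Fin k')
    {P : Fin n → (Fin k' → ℕ → ℕ) → (Fin m → ℕ) → ℕ} (hP : ∀ j, Subst F k' m (P j)) :
    Subst F k' m (fun gs w => F0 (fun i => gs (σ i)) (fun j => P j gs w)) := by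
  induction h with
  | proj j => exact hP j
  | arg i _ _ ih => exact .arg m (σ i) _ ih
  | app r f hf _ _ ih => exact .app m r f hf _ fun j => ih j

/-- If `F' : T_1^k → T_{m+1}` is `F`-substitutional, then there is an
`F`-substitutional mapping `G : T_1^{k+1} → T_m` with
`F'(f₁,…,f_k)(s,t₁,…,t_m) = G(f₁,…,f_k,const_s)(t₁,…,t_m)`. -/
theorem exists_subst_snoc_const (F : ∀ r : ℕ, Set ((Fin r → ℕ) → ℕ))
    (k m : ℕ) (hm : 1 ≤ m)
    (F' : (Fin k → ℕ → ℕ) → (Fin (m + 1) → ℕ) → ℕ)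
    (hF' : Subst F k (m + 1) F') :
    ∃ G : (Fin (k + 1) → ℕ → ℕ) → (Fin m → ℕ) → ℕ,
      Subst F (k + 1) m G ∧
      ∀ (fs : Fin k → ℕ → ℕ) (v : Fin (m + 1) → ℕ),
        F' fs v = G (Fin.snoc fs (fun _ => v 0)) (fun j => v j.succ) := by
  let P : Fin (m + 1) → (Fin (k + 1) → ℕ → ℕ) → (Fin m → ℕ) → ℕ :=
    Fin.cons (fun gs w => gs (Fin.last k) (w ⟨0, hm⟩)) fun j _ w => w j
  have hP : ∀ j, Subst F (k + 1) m (P j) := Fin.cases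
    (.arg m (Fin.last k) _ (.proj m ⟨0, hm⟩)) fun j => .proj m j
  refine ⟨_, hF'.comp Fin.castSucc hP, fun fs v => ?_⟩
  congr 1 <;> funext j
  · simp
  · cases j using Fin.cases <;> simp [P]
end

section
/- Let F be a subset of the total functions on ℕ and F' : T_1^k → T_{m+1} a mapping. Then F' is F-substitutional if and only if there exists an F-substitutional operator G : T_1^{k+m} → T_1 such that F'(f_1,...,f_k)(s_1,...,s_m,t) = G(f_1,...,f_k,const_{s_1},...,const_{s_m})(t) for all f_1,...,f_k ∈ T_1 and all s_1,...,s_m,t ∈ ℕ. -/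
/-- The `F`-substitutional operators (mappings of `T_1^k` into `T_1`). -/
inductive SubstOp (F : ∀ r : ℕ, Set ((Fin r → ℕ) → ℕ)) (k : ℕ) : Op k → Prop
  | id : SubstOp F k (fun _ n => n)
  | arg (i : Fin k) (F0 : Op k) : SubstOp F k F0 →
      SubstOp F k (fun fs n => fs i (F0 fs n))
  | app (r : ℕ) (f : (Fin r → ℕ) → ℕ) (hf : f ∈ F r) (Fs : Fin r → Op k) :
      (∀ j, SubstOp F k (Fs j)) →
      SubstOp F k (fun fs n => f (fun j => Fs j fs n))

/-!
Both directions are inductions on the derivation. Under the correspondence the projection onto `t`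
is the identity operator and the projection onto `s_j` is the operator applying the argument
`const_{s_j}` (to anything); postcomposition and combination via `F` translate clause by clause.
-/

theorem Subst.exists_substOp {F : ∀ r : ℕ, Set ((Fin r → ℕ) → ℕ)} {k m : ℕ}
    {F' : (Fin k → ℕ → ℕ) → (Fin (m + 1) → ℕ) → ℕ} (h : Subst F k (m + 1) F') :
    ∃ G : Op (k + m), SubstOp F (k + m) G ∧
      ∀ fs v, F' fs v = G (Fin.append fs (fun j _ => v j.castSucc)) (v (Fin.last m)) := by
  induction h with
  | proj j =>
    cases j using Fin.lastCases with
    | last => exact ⟨fun _ t => t, .id, fun _ _ => rfl⟩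
    | cast j =>
      exact ⟨fun fs t => fs (Fin.natAdd k j) t, .arg _ _ .id,
        fun fs v => by simp only [Fin.append_right]⟩
  | arg i F0 _ ih =>
    obtain ⟨G, hG, hF0⟩ := ih
    exact ⟨fun fs t => fs (Fin.castAdd m i) (G fs t), .arg _ _ hG,
      fun fs v => by simp only [Fin.append_left, hF0]⟩
  | app r f hf Fs _ ih =>
    choose Gs hGs hFs using ih
    exact ⟨fun fs t => f (fun j => Gs j fs t), .app r f hf Gs hGs,
      fun fs v => by simp only [hFs]⟩

theorem SubstOp.subst_append {F : ∀ r : ℕ, Set ((Fin r → ℕ) → ℕ)} {k m : ℕ} {G : Op (k + m)}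
    (h : SubstOp F (k + m) G) :
    Subst F k (m + 1)
      (fun fs v => G (Fin.append fs (fun j _ => v j.castSucc)) (v (Fin.last m))) := by
  induction h with
  | id => exact .proj _ (Fin.last m)
  | arg i G _ ih =>
    cases i using Fin.addCases with
    | left i => simpa only [Fin.append_left] using Subst.arg _ i _ ih
    | right j => simpa only [Fin.append_right] using Subst.proj (m + 1) j.castSucc
  | app r f hf Gs _ ih => exact .app _ r f hf _ ih

/-- `F' : T_1^k → T_{m+1}` is `F`-substitutional iff there exists an
`F`-substitutional operator `G : T_1^{k+m} → T_1` such that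
`F'(f₁,…,f_k)(s₁,…,s_m,t) = G(f₁,…,f_k,const_{s₁},…,const_{s_m})(t)`. -/
theorem subst_iff_exists_substOp (F : ∀ r : ℕ, Set ((Fin r → ℕ) → ℕ))
    (k m : ℕ) (F' : (Fin k → ℕ → ℕ) → (Fin (m + 1) → ℕ) → ℕ) :
    Subst F k (m + 1) F' ↔
      ∃ G : Op (k + m), SubstOp F (k + m) G ∧
        ∀ (fs : Fin k → ℕ → ℕ) (v : Fin (m + 1) → ℕ),
          F' fs v =
            G (Fin.append fs (fun (j : Fin m) (_ : ℕ) => v j.castSucc))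
              (v (Fin.last m)) := by
  refine ⟨Subst.exists_substOp, fun ⟨G, hG, hF'⟩ => ?_⟩
  rw [show F' = _ from funext₂ hF']
  exact hG.subst_append
end

section
/- Let O be an appropriate class of operators and let F be the class of all O-representable functions. Then every F-substitutional operator belongs to O. -/
namespace Appropriate

variable {O : OpClass}

/-- The identity operator is the diagonalization of the last projection. -/
theorem id_mem (hO : Appropriate O) (k : ℕ) : (fun _ n => n : Op k) ∈ O k := by
  simpa using hO.diag k _ (hO.proj (k + 1) (Fin.last k))

theorem comp_mem (hO : Appropriate O) {k : ℕ} {A B : Op k} (hA : A ∈ O k) (hB : B ∈ O k) :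
    (fun fs n => A fs (B fs n)) ∈ O k := by
  simpa using hO.subst 2 k _ ![A, B] hO.comp (Fin.forall_fin_two.2 ⟨hA, hB⟩)

theorem apply_mem (hO : Appropriate O) {k : ℕ} (i : Fin k) {A : Op k} (hA : A ∈ O k) :
    (fun fs n => fs i (A fs n)) ∈ O k :=
  hO.comp_mem (hO.proj k i) hA

theorem representable_lift_mem (hO : Appropriate O) {k r : ℕ} {f : (Fin r → ℕ) → ℕ}
    (hf : Representable O r f) {Fs : Fin r → Op k} (hFs : ∀ j, Fs j ∈ O k) :
    (fun fs n => f (fun j => Fs j fs n)) ∈ O k :=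
  hO.subst r k _ Fs hf hFs

end Appropriate

theorem SubstOp.mem_of_representable {O : OpClass} (hO : Appropriate O)
    {F : ∀ r : ℕ, Set ((Fin r → ℕ) → ℕ)} (hF : ∀ r, ∀ f ∈ F r, Representable O r f)
    {k : ℕ} {G : Op k} (hG : SubstOp F k G) : G ∈ O k := by
  induction hG with
  | id => exact hO.id_mem k
  | arg i _ _ ih => exact hO.apply_mem i ih
  | app r f hf _ _ ih => exact hO.representable_lift_mem (hF r f hf) ih

/-- If `F` is the class of all `O`-representable functions, for an appropriate
class `O`, then every `F`-substitutional operator belongs to `O`. -/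
theorem substOp_representable_mem (O : OpClass) (hO : Appropriate O)
    (k : ℕ) (G : Op k)
    (hG : SubstOp (fun r => {f | Representable O r f}) k G) :
    G ∈ O k :=
  hG.mem_of_representable hO fun _ _ hf => hf
end

section
/- Let F be any class of total functions on ℕ and G a k-ary F-substitutional operator. Then there exists a natural number v with the following property: for all f_1,...,f_k ∈ T_1 and all n ∈ ℕ there exists a finite set A ⊆ ℕ with at most v elements such that G(g_1,...,g_k)(n) = G(f_1,...,f_k)(n) whenever g_1,...,g_k ∈ T_1 agree with f_1,...,f_k respectively on all t ∈ A. -/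
/-! By induction on the operator. The value `fs i (F0 fs n)` is determined by the points
determining `F0 fs n` together with the single point `F0 fs n`, so one point is added; a
combination `f (F1 fs n, …, Fr fs n)` is determined by the union of the sets for its `r`
components, so the bounds add up. The bound never depends on `fs` or `n`, only on the
construction of the operator. -/

def DeterminedOn {k : ℕ} (G : Op k) (fs : Fin k → ℕ → ℕ) (n : ℕ) (A : Finset ℕ) : Prop :=
  ∀ gs : Fin k → ℕ → ℕ, (∀ i, ∀ t ∈ A, gs i t = fs i t) → G gs n = G fs n

def StronglyContinuousWith {k : ℕ} (G : Op k) (v : ℕ) : Prop :=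
  ∀ (fs : Fin k → ℕ → ℕ) (n : ℕ), ∃ A : Finset ℕ, A.card ≤ v ∧ DeterminedOn G fs n A

section

variable {k : ℕ}

theorem DeterminedOn.mono {G : Op k} {fs : Fin k → ℕ → ℕ} {n : ℕ} {A B : Finset ℕ}
    (hA : DeterminedOn G fs n A) (hAB : A ⊆ B) : DeterminedOn G fs n B :=
  fun gs hgs => hA gs fun i t ht => hgs i t (hAB ht)

theorem stronglyContinuousWith_id : StronglyContinuousWith (fun (_ : Fin k → ℕ → ℕ) n => n) 0 :=
  fun _ _ => ⟨∅, le_rfl, fun _ _ => rfl⟩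

theorem StronglyContinuousWith.comp_arg {F0 : Op k} {v : ℕ} (hF0 : StronglyContinuousWith F0 v)
    (i : Fin k) : StronglyContinuousWith (fun fs n => fs i (F0 fs n)) (v + 1) := by
  intro fs n
  obtain ⟨A, hA, hAF0⟩ := hF0 fs n
  refine ⟨insert (F0 fs n) A, (Finset.card_insert_le _ _).trans (by omega), fun gs hgs => ?_⟩
  have hF0_eq : F0 gs n = F0 fs n := (hAF0.mono (Finset.subset_insert _ _)) gs hgs
  change gs i (F0 gs n) = fs i (F0 fs n)
  rw [hF0_eq]
  exact hgs i _ (Finset.mem_insert_self _ _)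

theorem stronglyContinuousWith_comp {ι : Type*} [Fintype ι] (f : (ι → ℕ) → ℕ) {Fs : ι → Op k}
    {v : ι → ℕ} (hFs : ∀ j, StronglyContinuousWith (Fs j) (v j)) :
    StronglyContinuousWith (fun fs n => f (fun j => Fs j fs n)) (∑ j, v j) := by
  classical
  intro fs n
  choose A hA hAFs using fun j => hFs j fs n
  refine ⟨Finset.univ.biUnion A,
    Finset.card_biUnion_le.trans (Finset.sum_le_sum fun j _ => hA j), fun gs hgs => ?_⟩
  have hFs_eq : ∀ j, Fs j gs n = Fs j fs n := fun j =>
    (hAFs j).mono (Finset.subset_biUnion_of_mem A (Finset.mem_univ j)) gs hgs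
  simp only [hFs_eq]

end

/-- Strong continuity of `F`-substitutional operators: there is a uniform
cardinality bound `v` such that for each input there is a set `A` of at most
`v` points on which the value only depends. -/
theorem substOp_strong_continuity (F : ∀ r : ℕ, Set ((Fin r → ℕ) → ℕ))
    (k : ℕ) (G : Op k) (hG : SubstOp F k G) :
    ∃ v : ℕ, ∀ (fs : Fin k → ℕ → ℕ) (n : ℕ), ∃ A : Finset ℕ,
      A.card ≤ v ∧
      ∀ gs : Fin k → ℕ → ℕ,
        (∀ i, ∀ t ∈ A, gs i t = fs i t) → G gs n = G fs n := by
  suffices ∃ v, StronglyContinuousWith G v from this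
  induction hG with
  | id => exact ⟨0, stronglyContinuousWith_id⟩
  | arg i _ _ ih =>
    obtain ⟨v, hv⟩ := ih
    exact ⟨v + 1, hv.comp_arg i⟩
  | app _ f _ _ _ ih =>
    choose v hv using ih
    exact ⟨∑ j, v j, stronglyContinuousWith_comp f hv⟩
end

section
/- Let O be a decent class of operators. Then for any rational number a there exists an O-representable function lt_a : ℕ³ → ℕ such that for all x,y,z ∈ ℕ: lt_a(x,y,z) > 0 if and only if (x − y)/(z+1) < a (where the subtraction and division are over the rationals/reals). -/
/-- A decent class of operators: appropriate, and successor, truncated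
subtraction and `δ₁` are `O`-representable. -/
structure Decent (O : OpClass) : Prop where
  appropriate : Appropriate O
  succ : Representable O 1 (fun v => v 0 + 1)
  tsub : Representable O 2 (fun v => v 0 - v 1)
  delta1 : Representable O 3 (fun v => if v 0 = 0 then v 1 else v 2)

/-!
Without addition or multiplication among the operations at hand, `(x - y) / (z + 1) < p / q`,
i.e. `q (x - y) < p (z + 1)`, cannot be decided by computing both sides. Instead a comparison
`m u < n v` with constants `m, n` is decided by the Euclidean algorithm on `(m, n)`: writing
`n = a m + r`, either `u < a v`, and then the comparison holds, or it is equivalent to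
`m (u - a v) < r v`, where `u - a v` is an iterated truncated subtraction. Negating and swapping
the variables exchanges the roles of `m` and `r` and turns `<` into `≤`; the Euclidean step
works for `≤` in the same way.
-/

theorem Nat.mul_lt_mul_iff_lt_div_mul_or {m n u v : ℕ} (hm : 0 < m) :
    m * u < n * v ↔ u < n / m * v ∨ m * (u - n / m * v) < n % m * v := by
  have hn := Nat.div_add_mod n m
  generalize n / m = a, n % m = r at hn ⊢
  subst hn
  rcases lt_or_ge u (a * v) with huv | huv
  · exact iff_of_true (by nlinarith) (.inl huv)
  · obtain ⟨t, rfl⟩ := Nat.exists_eq_add_of_le huv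
    rw [Nat.add_sub_cancel_left, or_iff_right (by omega)]
    constructor <;> intro h <;> nlinarith

theorem Nat.mul_le_mul_iff_lt_div_mul_or {m n u v : ℕ} :
    m * u ≤ n * v ↔ u < n / m * v ∨ m * (u - n / m * v) ≤ n % m * v := by
  have hn := Nat.div_add_mod n m
  generalize n / m = a, n % m = r at hn ⊢
  subst hn
  rcases lt_or_ge u (a * v) with huv | huv
  · exact iff_of_true (by nlinarith) (.inl huv)
  · obtain ⟨t, rfl⟩ := Nat.exists_eq_add_of_le huv
    rw [Nat.add_sub_cancel_left, or_iff_right (by omega)]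
    constructor <;> intro h <;> nlinarith

theorem Rat.div_lt_iff_mul_den_lt_num_mul {t d : ℤ} (hd : 0 < d) (a : ℚ) :
    (t : ℚ) / d < a ↔ t * a.den < a.num * d := by
  conv_lhs => rw [← a.num_div_den]
  rw [div_lt_div_iff₀ (by exact_mod_cast hd) (by exact_mod_cast a.den_pos)]
  exact_mod_cast Iff.rfl

theorem Int.sub_mul_lt_natCast_mul_iff {x y q n s : ℕ} (hq : 0 < q) :
    ((x : ℤ) - y) * q < n * s ↔ x < y ∨ q * (x - y) < n * s := by
  rcases lt_or_ge x y with hxy | hxy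
  · exact iff_of_true (by nlinarith) (.inl hxy)
  · rw [or_iff_right (by omega)]
    zify [hxy]
    rw [mul_comm]

theorem Int.sub_mul_lt_neg_natCast_mul_iff {x y q n s : ℕ} :
    ((x : ℤ) - y) * q < -(n * s) ↔ n * s < q * (y - x) := by
  rcases lt_or_ge x y with hxy | hxy
  · zify [hxy.le]
    constructor <;> intro h <;> linarith
  · rw [Nat.sub_eq_zero_of_le hxy]
    exact iff_of_false (by nlinarith) (by simp)

variable {O : OpClass}

namespace Representable

theorem proj (hA : Appropriate O) {k : ℕ} (i : Fin k) : Representable O k (fun v => v i) :=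
  hA.proj k i

theorem comp (hA : Appropriate O) {m k : ℕ} {f : (Fin m → ℕ) → ℕ}
    {g : Fin m → (Fin k → ℕ) → ℕ} (hf : Representable O m f)
    (hg : ∀ i, Representable O k (g i)) :
    Representable O k (fun v => f (fun i => g i v)) :=
  hA.subst m k _ _ hf hg

theorem comp₂ (hA : Appropriate O) {k : ℕ} {h : (Fin 2 → ℕ) → ℕ} {f g : (Fin k → ℕ) → ℕ}
    (hh : Representable O 2 h) (hf : Representable O k f) (hg : Representable O k g) :
    Representable O k (fun v => h ![f v, g v]) := by
  convert comp hA hh (g := ![f, g]) (Fin.forall_fin_two.2 ⟨hf, hg⟩) using 3 with v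
  ext i
  fin_cases i <;> rfl

theorem comp₃ (hA : Appropriate O) {k : ℕ} {h : (Fin 3 → ℕ) → ℕ} {f g l : (Fin k → ℕ) → ℕ}
    (hh : Representable O 3 h) (hf : Representable O k f) (hg : Representable O k g)
    (hl : Representable O k l) :
    Representable O k (fun v => h ![f v, g v, l v]) := by
  convert comp hA hh (g := ![f, g, l]) (Fin.forall_fin_succ.2 ⟨hf, Fin.forall_fin_two.2 ⟨hg, hl⟩⟩)
    using 3 with v
  ext i
  fin_cases i <;> rfl

variable (hO : Decent O) {k : ℕ} {f g l : (Fin k → ℕ) → ℕ}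
include hO

theorem succ (hf : Representable O k f) : Representable O k (fun v => f v + 1) := by
  simpa using comp hO.appropriate hO.succ (g := ![f]) (Fin.forall_fin_one.2 hf)

theorem sub (hf : Representable O k f) (hg : Representable O k g) :
    Representable O k (fun v => f v - g v) :=
  comp₂ hO.appropriate hO.tsub hf hg

theorem ite_eq_zero (hf : Representable O k f) (hg : Representable O k g)
    (hl : Representable O k l) :
    Representable O k (fun v => if f v = 0 then g v else l v) :=
  comp₃ hO.appropriate hO.delta1 hf hg hl

theorem const [NeZero k] (c : ℕ) : Representable O k (fun _ => c) := by
  induction c with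
  | zero => simpa using sub hO (proj hO.appropriate (0 : Fin k)) (proj hO.appropriate 0)
  | succ c ih => exact succ hO ih

theorem sub_mul (a : ℕ) (hf : Representable O k f) (hg : Representable O k g) :
    Representable O k (fun v => f v - a * g v) := by
  induction a with
  | zero => simpa using hf
  | succ a ih => simpa [Nat.sub_sub, Nat.succ_mul] using sub hO ih hg

end Representable

def RepresentablePred (O : OpClass) (k : ℕ) (p : (Fin k → ℕ) → Prop) : Prop :=
  ∃ f, Representable O k f ∧ ∀ v, 0 < f v ↔ p v

namespace RepresentablePred

variable {k : ℕ} {p q : (Fin k → ℕ) → Prop}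

theorem of_iff (hp : RepresentablePred O k p) (h : ∀ v, p v ↔ q v) : RepresentablePred O k q :=
  let ⟨f, hf, hfp⟩ := hp
  ⟨f, hf, fun v => (hfp v).trans (h v)⟩

theorem comp₂ (hA : Appropriate O) {p : (Fin 2 → ℕ) → Prop} {f g : (Fin k → ℕ) → ℕ}
    (hp : RepresentablePred O 2 p) (hf : Representable O k f) (hg : Representable O k g) :
    RepresentablePred O k (fun v => p ![f v, g v]) :=
  let ⟨_, hh, hhp⟩ := hp
  ⟨_, Representable.comp₂ hA hh hf hg, fun _ => hhp _⟩

variable (hO : Decent O)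
include hO

theorem lt {f g : (Fin k → ℕ) → ℕ} (hf : Representable O k f) (hg : Representable O k g) :
    RepresentablePred O k (fun v => f v < g v) :=
  ⟨_, Representable.sub hO hg hf, fun _ => Nat.sub_pos_iff_lt⟩

theorem eq_zero [NeZero k] {f : (Fin k → ℕ) → ℕ} (hf : Representable O k f) :
    RepresentablePred O k (fun v => f v = 0) :=
  (lt hO hf (Representable.const hO 1)).of_iff fun _ => Nat.lt_one_iff

theorem not [NeZero k] (hp : RepresentablePred O k p) : RepresentablePred O k (fun v => ¬ p v) :=
  let ⟨_, hf, hfp⟩ := hp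
  (eq_zero hO hf).of_iff fun v => by rw [← hfp, Nat.pos_iff_ne_zero, not_not]

theorem or (hp : RepresentablePred O k p) (hq : RepresentablePred O k q) :
    RepresentablePred O k (fun v => p v ∨ q v) := by
  obtain ⟨f, hf, hfp⟩ := hp
  obtain ⟨g, hg, hgq⟩ := hq
  refine ⟨_, Representable.ite_eq_zero hO hf hg hf, fun v => ?_⟩
  simp only [← hfp, ← hgq]
  split_ifs with h <;> simp [h, Nat.pos_iff_ne_zero]

theorem swap_not {p : (Fin 2 → ℕ) → Prop} (hp : RepresentablePred O 2 p) :
    RepresentablePred O 2 (fun w => ¬ p ![w 1, w 0]) :=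
  not hO (comp₂ hO.appropriate hp (Representable.proj hO.appropriate 1)
    (Representable.proj hO.appropriate 0))

theorem lt_mul_or_sub_mul (a : ℕ) {p : (Fin 2 → ℕ) → Prop} (hp : RepresentablePred O 2 p) :
    RepresentablePred O 2 (fun w => w 0 < a * w 1 ∨ p ![w 0 - a * w 1, w 1]) := by
  have hA := hO.appropriate
  have hu := Representable.proj hA (0 : Fin 2)
  have hv := Representable.proj hA (1 : Fin 2)
  refine (or hO (eq_zero hO (Representable.sub_mul hO a (Representable.succ hO hu) hv))
    (comp₂ hA hp (Representable.sub_mul hO a hu hv) hv)).of_iff fun w => ?_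
  rw [Nat.sub_eq_zero_iff_le, Nat.add_one_le_iff]

theorem mul_lt_mul (m n : ℕ) : RepresentablePred O 2 (fun w => m * w 0 < n * w 1) := by
  suffices ∀ m n, RepresentablePred O 2 (fun w => m * w 0 < n * w 1) ∧
      RepresentablePred O 2 (fun w => n * w 0 < m * w 1) from (this m n).1
  intro m n
  induction m, n using Nat.gcd.induction with
  | H0 n =>
    have hfalse := lt hO (Representable.const hO (k := 2) 0) (Representable.const hO 0)
    refine ⟨?_, hfalse.of_iff fun _ => by simp⟩
    obtain rfl | hn := n.eq_zero_or_pos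
    · exact hfalse.of_iff fun _ => by simp
    · exact (lt hO (Representable.const hO 0) (Representable.proj hO.appropriate 1)).of_iff
        fun _ => by simp [hn]
  | H1 m n hm ih =>
    have hle : RepresentablePred O 2 (fun w => m * w 0 ≤ n * w 1) :=
      (lt_mul_or_sub_mul hO (n / m) ((swap_not hO ih.1).of_iff fun _ => not_lt)).of_iff
        fun _ => Nat.mul_le_mul_iff_lt_div_mul_or.symm
    exact ⟨(lt_mul_or_sub_mul hO (n / m) ih.2).of_iff
        fun _ => (Nat.mul_lt_mul_iff_lt_div_mul_or hm).symm,
      (swap_not hO hle).of_iff fun _ => not_le⟩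

end RepresentablePred

/-- For a decent class `O` and any rational `a`, there is an `O`-representable
function `lt_a` with `lt_a(x,y,z) > 0` iff `(x - y)/(z + 1) < a`. -/
theorem decent_exists_lt (O : OpClass) (hO : Decent O) (a : ℚ) :
    ∃ lt : (Fin 3 → ℕ) → ℕ, Representable O 3 lt ∧
      ∀ x y z : ℕ, 0 < lt ![x, y, z] ↔ ((x : ℚ) - (y : ℚ)) / ((z : ℚ) + 1) < a := by
  have hA := hO.appropriate
  have hx := Representable.proj hA (0 : Fin 3)
  have hy := Representable.proj hA (1 : Fin 3)
  have hz := Representable.succ hO (Representable.proj hA (2 : Fin 3))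
  suffices h : RepresentablePred O 3 fun w => ((w 0 : ℤ) - w 1) * a.den < a.num * (w 2 + 1) by
    obtain ⟨lt, hlt, hiff⟩ := h
    refine ⟨lt, hlt, fun x y z => (hiff ![x, y, z]).trans ?_⟩
    exact_mod_cast (Rat.div_lt_iff_mul_den_lt_num_mul (d := z + 1) (by omega) a).symm
  obtain ⟨n, hn | hn⟩ := a.num.eq_nat_or_neg <;> rw [hn]
  · exact (RepresentablePred.or hO (RepresentablePred.lt hO hx hy)
      (RepresentablePred.comp₂ hA (RepresentablePred.mul_lt_mul hO a.den n)
        (Representable.sub hO hx hy) hz)).of_iff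
      fun _ => (Int.sub_mul_lt_natCast_mul_iff a.den_pos).symm
  · exact (RepresentablePred.comp₂ hA (RepresentablePred.mul_lt_mul hO n a.den) hz
      (Representable.sub hO hy hx)).of_iff
      fun _ => by rw [neg_mul]; exact Int.sub_mul_lt_neg_natCast_mul_iff.symm
end

section
/- Let O be a decent class of operators. Then every locally uniformly O-computable real function θ : D → ℝ with compact domain D ⊆ ℝ^N is uniformly O-computable. -/
/-- A triple `(f,g,h)` of total unary functions on ℕ names the real number `ξ`. -/
def Names (f g h : ℕ → ℕ) (ξ : ℝ) : Prop :=
  ∀ t : ℕ, |((f t : ℝ) - (g t : ℝ)) / ((h t : ℝ) + 1) - ξ| < 1 / ((t : ℝ) + 1)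

/-- A `3N`-tuple of functions names the `N`-tuple of reals `ξ` componentwise. -/
def NamesTuple (N : ℕ) (fs : Fin (3 * N) → ℕ → ℕ) (ξ : Fin N → ℝ) : Prop :=
  ∀ i : Fin N,
    Names (fs ⟨3 * i.val, by have := i.isLt; omega⟩)
      (fs ⟨3 * i.val + 1, by have := i.isLt; omega⟩)
      (fs ⟨3 * i.val + 2, by have := i.isLt; omega⟩) (ξ i)

/-- Uniform `O`-computability of an `N`-argument real function with domain `D`. -/
def UnifComp (O : OpClass) (N : ℕ) (D : Set (Fin N → ℝ))
    (θ : (Fin N → ℝ) → ℝ) : Prop :=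
  ∃ F G H : Op (3 * N), F ∈ O (3 * N) ∧ G ∈ O (3 * N) ∧ H ∈ O (3 * N) ∧
    ∀ ξ ∈ D, ∀ fs, NamesTuple N fs ξ → Names (F fs) (G fs) (H fs) (θ ξ)

/-- Conditional `O`-computability of an `N`-argument real function with domain `D`. -/
def CondComp (O : OpClass) (N : ℕ) (D : Set (Fin N → ℝ))
    (θ : (Fin N → ℝ) → ℝ) : Prop :=
  ∃ E : Op (3 * N), ∃ F G H : Op (3 * N + 1),
    E ∈ O (3 * N) ∧ F ∈ O (3 * N + 1) ∧ G ∈ O (3 * N + 1) ∧ H ∈ O (3 * N + 1) ∧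
    ∀ ξ ∈ D, ∀ fs, NamesTuple N fs ξ →
      (∃ s : ℕ, E fs s = 0) ∧
      ∀ s : ℕ, E fs s = 0 →
        Names (F (Fin.snoc fs (fun _ => s))) (G (Fin.snoc fs (fun _ => s)))
          (H (Fin.snoc fs (fun _ => s))) (θ ξ)

/-!
Around each point of the compact domain choose a rational sup-norm ball `B(c, δ)`, `δ = 1/(s+1)`,
such that `θ` is uniformly computable on `D ∩ B(c, 3δ)`; finitely many of the small balls cover `D`.
Reading a name at the fixed precision `s` gives a test that accepts every point of `B(c, δ)` and only
points of `B(c, 3δ)`. Since the test does not depend on the precision `t`, the operators belonging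
to the finitely many balls can be glued pointwise in `t` by `δ₁`. The comparisons in the test need
only successor, truncated subtraction and `δ₁`.
-/

open Set Metric Topology

theorem Nat.le_or_mul_tsub_le_iff {q p a b : ℕ} (h : q ≤ p) :
    a ≤ b ∨ q * (a - b) ≤ (p - q) * b ↔ q * a ≤ p * b := by
  rcases le_or_gt a b with hab | hab
  · exact iff_of_true (Or.inl hab) (Nat.mul_le_mul h hab)
  · have := Nat.mul_le_mul_left q hab.le
    have := Nat.mul_le_mul_right b h
    rw [or_iff_right hab.not_ge, Nat.mul_sub, Nat.sub_mul]
    omega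

theorem Nat.mul_tsub_le_mul_tsub_iff {q p a b : ℕ} (h : p < q) :
    (q - p) * a ≤ p * (b - a) ↔ q * a ≤ p * b := by
  rw [Nat.mul_sub, Nat.sub_mul]
  rcases le_or_gt a b with hab | hab
  · have := Nat.mul_le_mul_left p hab
    have := Nat.mul_le_mul_right a h.le
    omega
  · have := Nat.mul_le_mul_left p hab.le
    have := Nat.mul_lt_mul_of_pos_right h (Nat.zero_lt_of_lt hab)
    omega

theorem div_le_rat_iff_of_nonneg {q : ℚ} (hq : 0 ≤ q) (u v w : ℕ) :
    ((u : ℝ) - v) / (w + 1) ≤ q ↔ q.den * (u - v) ≤ q.num.toNat * (w + 1) := by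
  have hnum : ((q.num.toNat : ℕ) : ℝ) = q.num := by
    exact_mod_cast Int.toNat_of_nonneg (Rat.num_nonneg.2 hq)
  rw [div_le_iff₀ (by positivity), Rat.cast_def, ← hnum, div_mul_eq_mul_div,
    le_div_iff₀ (by exact_mod_cast q.den_pos)]
  rcases le_total u v with h | h
  · rw [Nat.sub_eq_zero_of_le h, mul_zero]
    refine iff_of_true ?_ (Nat.zero_le _)
    have : (u : ℝ) ≤ v := by exact_mod_cast h
    nlinarith [Nat.cast_nonneg (α := ℝ) q.num.toNat]
  · rw [← Nat.cast_le (α := ℝ)]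
    push_cast [Nat.cast_sub h]
    constructor <;> intro <;> linarith

theorem div_le_rat_iff_of_neg {q : ℚ} (hq : q < 0) (u v w : ℕ) :
    ((u : ℝ) - v) / (w + 1) ≤ q ↔ (-q.num).toNat * (w + 1) ≤ q.den * (v - u) := by
  have hnum : (((-q.num).toNat : ℕ) : ℝ) = -q.num := by
    exact_mod_cast Int.toNat_of_nonneg (neg_nonneg.2 (Rat.num_neg.2 hq).le)
  have hpos : 0 < (-q.num).toNat := by have := Rat.num_neg.2 hq; omega
  rw [div_le_iff₀ (by positivity), Rat.cast_def, div_mul_eq_mul_div,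
    le_div_iff₀ (by exact_mod_cast q.den_pos)]
  rcases le_total v u with h | h
  · rw [Nat.sub_eq_zero_of_le h, mul_zero]
    refine iff_of_false ?_ (Nat.not_le.2 (by positivity))
    have : (v : ℝ) ≤ u := by exact_mod_cast h
    have : (0 : ℝ) < -q.num := by rw [← hnum]; exact_mod_cast hpos
    nlinarith
  · rw [← Nat.cast_le (α := ℝ)]
    push_cast [Nat.cast_sub h, hnum]
    constructor <;> intro <;> linarith

section Closure

variable {O : OpClass} {k : ℕ}

theorem Appropriate.mem_id (hO : Appropriate O) (k : ℕ) :
    (fun (_ : Fin k → ℕ → ℕ) (n : ℕ) => n) ∈ O k := by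
  simpa using hO.diag k (fun fs => fs (Fin.last k)) (hO.proj _ _)

def Decides (O : OpClass) (k : ℕ) (P : (Fin k → ℕ → ℕ) → ℕ → Prop) : Prop :=
  ∃ E ∈ O k, ∀ fs n, E fs n = 0 ↔ P fs n

theorem Decides.of_iff {P Q : (Fin k → ℕ → ℕ) → ℕ → Prop} (h : Decides O k P)
    (hPQ : ∀ fs n, P fs n ↔ Q fs n) : Decides O k Q :=
  let ⟨E, hE, hEP⟩ := h
  ⟨E, hE, fun fs n => (hEP fs n).trans (hPQ fs n)⟩

namespace Decent

variable (hO : Decent O)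
include hO

theorem mem_succ {A : Op k} (hA : A ∈ O k) : (fun fs n => A fs n + 1) ∈ O k :=
  hO.appropriate.subst 1 k _ ![A] hO.succ fun i => by fin_cases i; exact hA

theorem mem_tsub {A B : Op k} (hA : A ∈ O k) (hB : B ∈ O k) :
    (fun fs n => A fs n - B fs n) ∈ O k :=
  hO.appropriate.subst 2 k _ ![A, B] hO.tsub fun i => by fin_cases i <;> assumption

theorem mem_ite {A B C : Op k} (hA : A ∈ O k) (hB : B ∈ O k) (hC : C ∈ O k) :
    (fun fs n => if A fs n = 0 then B fs n else C fs n) ∈ O k :=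
  hO.appropriate.subst 3 k _ ![A, B, C] hO.delta1 fun i => by fin_cases i <;> assumption

theorem mem_comp {A B : Op k} (hA : A ∈ O k) (hB : B ∈ O k) :
    (fun fs n => A fs (B fs n)) ∈ O k :=
  hO.appropriate.subst 2 k _ ![A, B] hO.appropriate.comp fun i => by
    fin_cases i <;> assumption

theorem mem_const (c : ℕ) : (fun (_ : Fin k → ℕ → ℕ) (_ : ℕ) => c) ∈ O k := by
  induction c with
  | zero => simpa using hO.mem_tsub (hO.appropriate.mem_id k) (hO.appropriate.mem_id k)
  | succ c ih => exact hO.mem_succ ih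

theorem mem_eval (i : Fin k) (s : ℕ) :
    (fun (fs : Fin k → ℕ → ℕ) (_ : ℕ) => fs i s) ∈ O k :=
  hO.mem_comp (hO.appropriate.proj k i) (hO.mem_const s)

theorem decides_true : Decides O k fun _ _ => True :=
  ⟨_, hO.mem_const 0, fun _ _ => iff_of_true rfl trivial⟩

theorem decides_false : Decides O k fun _ _ => False :=
  ⟨_, hO.mem_const 1, fun _ _ => iff_of_false one_ne_zero id⟩

theorem decides_le {A B : Op k} (hA : A ∈ O k) (hB : B ∈ O k) :
    Decides O k fun fs n => A fs n ≤ B fs n :=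
  ⟨_, hO.mem_tsub hA hB, fun _ _ => Nat.sub_eq_zero_iff_le⟩

theorem decides_and {P Q : (Fin k → ℕ → ℕ) → ℕ → Prop} (hP : Decides O k P)
    (hQ : Decides O k Q) : Decides O k fun fs n => P fs n ∧ Q fs n := by
  obtain ⟨EP, hEP, hP⟩ := hP
  obtain ⟨EQ, hEQ, hQ⟩ := hQ
  refine ⟨_, hO.mem_ite hEP hEQ (hO.mem_const 1), fun fs n => ?_⟩
  have := hP fs n
  have := hQ fs n
  split_ifs <;> simp_all

theorem decides_or {P Q : (Fin k → ℕ → ℕ) → ℕ → Prop} (hP : Decides O k P)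
    (hQ : Decides O k Q) : Decides O k fun fs n => P fs n ∨ Q fs n := by
  obtain ⟨EP, hEP, hP⟩ := hP
  obtain ⟨EQ, hEQ, hQ⟩ := hQ
  refine ⟨_, hO.mem_ite hEP (hO.mem_const 0) hEQ, fun fs n => ?_⟩
  have := hP fs n
  have := hQ fs n
  split_ifs <;> simp_all

theorem decides_forall_fin {m : ℕ} {P : Fin m → (Fin k → ℕ → ℕ) → ℕ → Prop}
    (hP : ∀ i, Decides O k (P i)) : Decides O k fun fs n => ∀ i, P i fs n := by
  induction m with
  | zero => exact hO.decides_true.of_iff fun _ _ => by simp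
  | succ m ih =>
    exact (hO.decides_and (hP 0) (ih fun i => hP i.succ)).of_iff fun fs n =>
      (Fin.forall_fin_succ (P := fun i => P i fs n)).symm

/-- Multiplication is not available: `q * A ≤ p * B` is reduced, Euclid-style, to comparisons
with smaller coefficients by subtracting the smaller from the larger one. -/
theorem decides_mul_le_mul (q p : ℕ) {A B : Op k} (hA : A ∈ O k) (hB : B ∈ O k) :
    Decides O k fun fs n => q * A fs n ≤ p * B fs n := by
  induction hm : q + p using Nat.strong_induction_on generalizing q p A B with
  | _ m ih =>
  subst hm
  rcases Nat.eq_zero_or_pos q with rfl | hq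
  · exact hO.decides_true.of_iff fun _ _ => by simp
  rcases Nat.eq_zero_or_pos p with rfl | hp
  · exact (hO.decides_le hA (hO.mem_const 0)).of_iff fun _ _ => by simp [hq.ne']
  rcases le_or_gt q p with hqp | hpq
  · exact (hO.decides_or (hO.decides_le hA hB)
      (ih _ (by omega) q (p - q) (hO.mem_tsub hA hB) hB rfl)).of_iff fun _ _ =>
        Nat.le_or_mul_tsub_le_iff hqp
  · exact (ih _ (by omega) (q - p) p hA (hO.mem_tsub hB hA) rfl).of_iff fun _ _ =>
      Nat.mul_tsub_le_mul_tsub_iff hpq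

theorem decides_div_le (q : ℚ) {A B C : Op k} (hA : A ∈ O k) (hB : B ∈ O k) (hC : C ∈ O k) :
    Decides O k fun fs n => ((A fs n : ℝ) - B fs n) / (C fs n + 1) ≤ q := by
  rcases le_or_gt 0 q with hq | hq
  · exact (hO.decides_mul_le_mul _ _ (hO.mem_tsub hA hB) (hO.mem_succ hC)).of_iff
      fun _ _ => (div_le_rat_iff_of_nonneg hq _ _ _).symm
  · exact (hO.decides_mul_le_mul _ _ (hO.mem_succ hC) (hO.mem_tsub hB hA)).of_iff
      fun _ _ => (div_le_rat_iff_of_neg hq _ _ _).symm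

theorem decides_le_div (q : ℚ) {A B C : Op k} (hA : A ∈ O k) (hB : B ∈ O k) (hC : C ∈ O k) :
    Decides O k fun fs n => (q : ℝ) ≤ ((A fs n : ℝ) - B fs n) / (C fs n + 1) :=
  (hO.decides_div_le (-q) hB hA hC).of_iff fun _ _ => by
    rw [Rat.cast_neg, ← neg_sub, neg_div, neg_le_neg_iff]

end Decent

end Closure

section Guard

variable {O : OpClass} {N : ℕ} {D D' V W : Set (Fin N → ℝ)} {θ : (Fin N → ℝ) → ℝ}

noncomputable def coordApprox (fs : Fin (3 * N) → ℕ → ℕ) (i : Fin N) (t : ℕ) : ℝ :=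
  ((fs ⟨3 * i.val, by omega⟩ t : ℝ) - fs ⟨3 * i.val + 1, by omega⟩ t) /
    (fs ⟨3 * i.val + 2, by omega⟩ t + 1)

theorem NamesTuple.abs_coordApprox_sub_lt {fs : Fin (3 * N) → ℕ → ℕ} {ξ : Fin N → ℝ}
    (h : NamesTuple N fs ξ) (i : Fin N) (t : ℕ) :
    |coordApprox fs i t - ξ i| < 1 / (t + 1) :=
  h i t

theorem Decent.decides_coordApprox_mem_Icc (hO : Decent O) (s : ℕ) (a b : Fin N → ℚ) :
    Decides O (3 * N) fun fs _ => ∀ i, coordApprox fs i s ∈ Icc (a i : ℝ) (b i) :=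
  hO.decides_forall_fin fun i => hO.decides_and
    (hO.decides_le_div (a i) (hO.mem_eval _ s) (hO.mem_eval _ s) (hO.mem_eval _ s))
    (hO.decides_div_le (b i) (hO.mem_eval _ s) (hO.mem_eval _ s) (hO.mem_eval _ s))

def GuardedComp (O : OpClass) (N : ℕ) (D : Set (Fin N → ℝ)) (θ : (Fin N → ℝ) → ℝ)
    (V : Set (Fin N → ℝ)) : Prop :=
  ∃ P : (Fin (3 * N) → ℕ → ℕ) → Prop, Decides O (3 * N) (fun fs _ => P fs) ∧
    ∃ F G H : Op (3 * N), F ∈ O (3 * N) ∧ G ∈ O (3 * N) ∧ H ∈ O (3 * N) ∧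
      ∀ ξ ∈ D, ∀ fs, NamesTuple N fs ξ →
        (P fs → Names (F fs) (G fs) (H fs) (θ ξ)) ∧ (ξ ∈ V → P fs)

theorem Decent.guardedComp_empty (hO : Decent O) : GuardedComp O N D θ ∅ :=
  ⟨fun _ => False, hO.decides_false, _, _, _, hO.mem_const 0, hO.mem_const 0,
    hO.mem_const 0, fun _ _ _ _ => ⟨False.elim, False.elim⟩⟩

theorem GuardedComp.union (hO : Decent O) (hV : GuardedComp O N D θ V)
    (hW : GuardedComp O N D θ W) : GuardedComp O N D θ (V ∪ W) := by
  obtain ⟨P, ⟨E, hE, hEP⟩, F, G, H, hF, hG, hH, hV⟩ := hV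
  obtain ⟨Q, hQ, F', G', H', hF', hG', hH', hW⟩ := hW
  refine ⟨fun fs => P fs ∨ Q fs, hO.decides_or ⟨E, hE, hEP⟩ hQ,
    fun fs n => if E fs n = 0 then F fs n else F' fs n,
    fun fs n => if E fs n = 0 then G fs n else G' fs n,
    fun fs n => if E fs n = 0 then H fs n else H' fs n,
    hO.mem_ite hE hF hF', hO.mem_ite hE hG hG', hO.mem_ite hE hH hH',
    fun ξ hξ fs hfs => ⟨fun hPQ => ?_, Or.imp (hV ξ hξ fs hfs).2 (hW ξ hξ fs hfs).2⟩⟩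
  by_cases hP : P fs
  · simpa [hEP, hP] using (hV ξ hξ fs hfs).1 hP
  · simpa [hEP, hP] using (hW ξ hξ fs hfs).1 (hPQ.resolve_left hP)

theorem GuardedComp.biUnion (hO : Decent O) {ι : Type*} (t : Finset ι)
    {V : ι → Set (Fin N → ℝ)} (h : ∀ i ∈ t, GuardedComp O N D θ (V i)) : GuardedComp O N D θ (⋃ i ∈ t, V i) := by
  classical
  induction t using Finset.induction_on with
  | empty => simpa using hO.guardedComp_empty
  | insert a t _ ih =>
    rw [Finset.set_biUnion_insert]
    exact (h a (Finset.mem_insert_self a t)).union hO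
      (ih fun i hi => h i (Finset.mem_insert_of_mem hi))

theorem GuardedComp.unifComp (h : GuardedComp O N D θ V) (hDV : D ⊆ V) : UnifComp O N D θ :=
  let ⟨_, _, F, G, H, hF, hG, hH, hV⟩ := h
  ⟨F, G, H, hF, hG, hH, fun ξ hξ fs hfs => (hV ξ hξ fs hfs).1 ((hV ξ hξ fs hfs).2 (hDV hξ))⟩

theorem UnifComp.mono (h : UnifComp O N D θ) (hD : D' ⊆ D) : UnifComp O N D' θ :=
  let ⟨F, G, H, hF, hG, hH, hθ⟩ := h
  ⟨F, G, H, hF, hG, hH, fun ξ hξ => hθ ξ (hD hξ)⟩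

theorem Decent.guardedComp_ball (hO : Decent O) (s : ℕ) (c : Fin N → ℚ)
    (h : UnifComp O N (D ∩ ball (fun i => (c i : ℝ)) (3 / (s + 1))) θ) :
    GuardedComp O N D θ (ball (fun i => (c i : ℝ)) (1 / (s + 1))) := by
  obtain ⟨F, G, H, hF, hG, hH, hθ⟩ := h
  have hδ2 : (2 : ℝ) / (s + 1) = 2 * (1 / (s + 1)) := by ring
  have hδ3 : (3 : ℝ) / (s + 1) = 3 * (1 / (s + 1)) := by ring
  refine ⟨fun fs => ∀ i, coordApprox fs i s ∈
      Icc ((c i - 2 / (s + 1) : ℚ) : ℝ) ((c i + 2 / (s + 1) : ℚ) : ℝ),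
    hO.decides_coordApprox_mem_Icc s _ _, F, G, H, hF, hG, hH,
    fun ξ hξ fs hfs => ⟨fun hP => hθ ξ ⟨hξ, ?_⟩ fs hfs, fun hξc i => ?_⟩⟩
  · rw [mem_ball, dist_pi_lt_iff (by positivity)]
    intro i
    have := hfs.abs_coordApprox_sub_lt i s
    obtain ⟨h1, h2⟩ := hP i
    rw [Real.dist_eq, abs_lt] at *
    push_cast at h1 h2
    constructor <;> linarith
  · rw [mem_ball, dist_pi_lt_iff (by positivity)] at hξc
    have := hfs.abs_coordApprox_sub_lt i s
    have := hξc i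
    rw [Real.dist_eq, abs_lt] at *
    push_cast
    constructor <;> linarith

end Guard

theorem exists_rat_ball_subset {N : ℕ} {x : Fin N → ℝ} {U : Set (Fin N → ℝ)}
    (hU : U ∈ 𝓝 x) :
    ∃ (s : ℕ) (c : Fin N → ℚ), x ∈ ball (fun i => (c i : ℝ)) (1 / (s + 1)) ∧
      ball (fun i => (c i : ℝ)) (3 / (s + 1)) ⊆ U := by
  obtain ⟨ε, hε, hεU⟩ := Metric.mem_nhds_iff.1 hU
  obtain ⟨s, hs⟩ := exists_nat_one_div_lt (by positivity : 0 < ε / 4)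
  have hδ : (0 : ℝ) < 1 / (s + 1) := by positivity
  choose c hc using fun i => Rat.denseRange_cast.exists_dist_lt (x i) hδ
  have hxc : dist x (fun i => (c i : ℝ)) < 1 / (s + 1) := (dist_pi_lt_iff hδ).2 hc
  refine ⟨s, c, mem_ball.2 hxc, (ball_subset_ball' ?_).trans hεU⟩
  have : (3 : ℝ) / (s + 1) = 3 * (1 / (s + 1)) := by ring
  rw [dist_comm]
  linarith

/-- For a decent class `O`, every locally uniformly `O`-computable real
function with compact domain is uniformly `O`-computable. -/
theorem locallyUnifComp_compact_unifComp (O : OpClass) (hO : Decent O)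
    (N : ℕ) (D : Set (Fin N → ℝ)) (hD : IsCompact D)
    (θ : (Fin N → ℝ) → ℝ)
    (hloc : ∀ ξ ∈ D, ∃ U ∈ nhds ξ, UnifComp O N (D ∩ U) θ) :
    UnifComp O N D θ := by
  have hball : ∀ x ∈ D, ∃ (s : ℕ) (c : Fin N → ℚ),
      x ∈ ball (fun i => (c i : ℝ)) (1 / (s + 1)) ∧
      GuardedComp O N D θ (ball (fun i => (c i : ℝ)) (1 / (s + 1))) := by
    intro x hx
    obtain ⟨U, hU, hθ⟩ := hloc x hx
    obtain ⟨s, c, hxc, hcU⟩ := exists_rat_ball_subset hU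
    exact ⟨s, c, hxc, hO.guardedComp_ball s c (hθ.mono (inter_subset_inter_right D hcU))⟩
  choose! s c hxc hguard using hball
  obtain ⟨t, htD, hcover⟩ :=
    hD.elim_nhds_subcover _ fun x hx => isOpen_ball.mem_nhds (hxc x hx)
  exact (GuardedComp.biUnion hO t fun x hx => hguard x (htD x hx)).unifComp hcover
end
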